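/- Fix a sequence s and a window size ρ. Let H be a strict, transitively closed episode occurring in s within a window of length at most ρ. Then there exists a strict, transitively closed episode F with F ⪯ H, obtained from H by repeatedly removing derivable proper skeleton edges and derivable solitary nodes, such that F has no derivable proper skeleton edges and no derivable solitary nodes, H ⪯ icl(F), every non-derivable proper skeleton edge of H remains an edge of F, and every non-derivable solitary node of H remains a node of F. -/

import Mathlib

open scoped Classical

/-- An episode: a finite directed acyclic graph with nodes drawn from `ℕ`,
labelled by symbols of an alphabet `α`. -/
structure Episode (α : Type*) where
  nodes : Finset ℕ
  edge : ℕ → ℕ → Prop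
  lab : ℕ → α
  edge_mem : ∀ ⦃x y : ℕ⦄, edge x y → x ∈ nodes ∧ y ∈ nodes

namespace Episode

variable {α : Type*}

/-- Transitively closed: whenever there is a directed path from `u` to `v`,
`(u,v)` is an edge. -/
def TransClosed (G : Episode α) : Prop :=
  ∀ ⦃u v : ℕ⦄, Relation.TransGen G.edge u v → G.edge u v

/-- Acyclic: no directed cycles. -/
def Acyclic (G : Episode α) : Prop := ∀ v : ℕ, ¬ Relation.TransGen G.edge v v

/-- Strict: any two distinct nodes sharing the same label are joined by a
directed path. -/
def Strict (G : Episode α) : Prop :=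
  ∀ u ∈ G.nodes, ∀ v ∈ G.nodes, u ≠ v → G.lab u = G.lab v →
    Relation.TransGen G.edge u v ∨ Relation.TransGen G.edge v u

/-- The class `𝒮` of strict, transitively closed (acyclic) episodes. -/
def inS (G : Episode α) : Prop := G.Acyclic ∧ G.TransClosed ∧ G.Strict

/-- A sequence `s` covers an episode `G`: there is an injective map from the
nodes of `G` to indices of `s` matching labels and respecting edges. -/
def Covers (s : List α) (G : Episode α) : Prop :=
  ∃ f : {v // v ∈ G.nodes} → Fin s.length,
    Function.Injective f ∧ (∀ v, s.get (f v) = G.lab v.1) ∧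
      ∀ u v, G.edge u.1 v.1 → f u < f v

/-- `f` witnesses that `s` is an instance of `G`: a bijective valid mapping. -/
def IsInstanceMap (s : List α) (G : Episode α)
    (f : {v // v ∈ G.nodes} → Fin s.length) : Prop :=
  Function.Bijective f ∧ (∀ v, s.get (f v) = G.lab v.1) ∧
    ∀ u v, G.edge u.1 v.1 → f u < f v

/-- The subgraph of `H` induced on a set `U` of nodes. -/
def restrict (H : Episode α) (U : Finset ℕ) : Episode α where
  nodes := U
  edge := fun x y => x ∈ U ∧ y ∈ U ∧ H.edge x y
  lab := H.lab
  edge_mem := by rintro x y ⟨h1, h2, -⟩; exact ⟨h1, h2⟩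

/-- `G ⪯ H`: `G` is a subepisode of `H`.  There is a subgraph of `H` with as
many nodes as `G` such that every sequence covering that subgraph covers `G`. -/
def Subep (G H : Episode α) : Prop :=
  ∃ U : Finset ℕ, U ⊆ H.nodes ∧ U.card = G.nodes.card ∧
    ∀ s : List α, Covers s (H.restrict U) → Covers s G

/-- `G ≺ H`: proper subepisode. -/
def ProperSubep (G H : Episode α) : Prop := Subep G H ∧ ¬ Subep H G

/-- `G ∼ H`: every sequence covers `G` iff it covers `H`. -/
def Equivalent (G H : Episode α) : Prop := ∀ s : List α, Covers s G ↔ Covers s H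

/-- The nodes of `G` are `0, …, card − 1` listed in the canonical order:
labels increase, and nodes with equal labels are ordered by the edges. -/
def CanonicallyIndexed [LinearOrder α] (G : Episode α) : Prop :=
  G.nodes = Finset.range G.nodes.card ∧
    ∀ u ∈ G.nodes, ∀ v ∈ G.nodes, u < v →
      G.lab u < G.lab v ∨ (G.lab u = G.lab v ∧ G.edge u v)

/-- An occurrence (instance) of `G` inside `s` whose span is smaller than the
window size `ρ`: an injective valid mapping with `max f − min f < ρ`. -/
def IsOcc (s : List α) (ρ : ℕ) (G : Episode α)
    (f : {v // v ∈ G.nodes} → Fin s.length) : Prop :=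
  Function.Injective f ∧ (∀ v, s.get (f v) = G.lab v.1) ∧
    (∀ u v, G.edge u.1 v.1 → f u < f v) ∧
    ∀ u v, (f u : ℕ) < (f v : ℕ) + ρ

/-- `G` occurs in `s` within some window of length at most `ρ`. -/
def Occurs (s : List α) (ρ : ℕ) (G : Episode α) : Prop := ∃ f, IsOcc s ρ G f

/-- The symbol `x` occurs in `s` inside the interval `[min f, max f]` of an
occurrence `f`. -/
def SymInWindow (s : List α) {G : Episode α}
    (f : {v // v ∈ G.nodes} → Fin s.length) (x : α) : Prop :=
  ∃ i : Fin s.length, s.get i = x ∧ (∃ u, f u ≤ i) ∧ ∃ v, i ≤ f v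

/-- The node closure `cl_N`: augment `G` with one new isolated node labelled
`x` for each symbol `x` of `s`, not labelling a node of `G`, that occurs inside
the interval of every occurrence of `G` (with span `< ρ`). -/
noncomputable def clN [LinearOrder α] (s : List α) (ρ : ℕ) (G : Episode α) :
    Episode α :=
  let newLabs : List α := (s.toFinset.filter
      (fun x => (∀ f, IsOcc s ρ G f → SymInWindow s f x) ∧
        ∀ v ∈ G.nodes, G.lab v ≠ x)).sort (· ≤ ·)
  let base : ℕ := G.nodes.sup id + 1
  { nodes := G.nodes ∪ (Finset.range newLabs.length).image (fun i => base + i)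
    edge := G.edge
    lab := fun v =>
      if h : base ≤ v ∧ v - base < newLabs.length ∧ v ∉ G.nodes then
        newLabs.get ⟨v - base, h.2.1⟩
      else G.lab v
    edge_mem := by
      intro x y h
      exact ⟨Finset.mem_union_left _ (G.edge_mem h).1,
        Finset.mem_union_left _ (G.edge_mem h).2⟩ }

/-- The edge closure `cl_E`: the maximal episode covered by all instances of
`G` in `s` with span `< ρ`; it has an edge `(x,y)` whenever the (unique) valid
mapping of every such instance places `x` before `y`. -/
def clE (s : List α) (ρ : ℕ) (G : Episode α) : Episode α where
  nodes := G.nodes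
  edge := fun x y => ∃ (hx : x ∈ G.nodes) (hy : y ∈ G.nodes),
    ∀ f, IsOcc s ρ G f → f ⟨x, hx⟩ < f ⟨y, hy⟩
  lab := G.lab
  edge_mem := by rintro x y ⟨hx, hy, -⟩; exact ⟨hx, hy⟩

/-- The `i`-closure `icl(G) = cl_E(cl_N(G))`. -/
noncomputable def icl [LinearOrder α] (s : List α) (ρ : ℕ) (G : Episode α) :
    Episode α :=
  clE s ρ (clN s ρ G)

/-- The window `s[a, b]` (0-based, inclusive endpoints). -/
def window (s : List α) (a b : ℕ) : List α := (s.take (b + 1)).drop a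

/-- `s[a,b]` is a minimal window of `G` in `s`: it covers `G` and no proper
subwindow of it covers `G`. -/
def IsMinimalWindow (s : List α) (G : Episode α) (a b : ℕ) : Prop :=
  a ≤ b ∧ b < s.length ∧ Covers (window s a b) G ∧
    ∀ a' b', a ≤ a' → b' ≤ b → a' ≤ b' → (a', b') ≠ (a, b) →
      ¬ Covers (window s a' b') G

/-- Fixed-window frequency: the number of windows of length `ρ` (indexed by
their right endpoints, windows may stick out of the sequence) covering `G`. -/
noncomputable def freqF (s : List α) (ρ : ℕ) (G : Episode α) : ℕ :=
  ((Finset.range (s.length + ρ - 1)).filter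
    (fun b => Covers (window s (b + 1 - ρ) b) G)).card

/-- Disjoint-window frequency: the maximal number of pairwise disjoint
intervals of length at most `ρ` whose windows cover `G`. -/
noncomputable def freqD (s : List α) (ρ : ℕ) (G : Episode α) : ℕ :=
  sSup {n : ℕ | ∃ I : Fin n → ℕ × ℕ,
    (∀ i, (I i).1 ≤ (I i).2 ∧ (I i).2 < (I i).1 + ρ ∧ (I i).2 < s.length ∧
      Covers (window s (I i).1 (I i).2) G) ∧
    ∀ i j, i ≠ j → (I i).2 < (I j).1 ∨ (I j).2 < (I i).1}

/-- `G` is f-closed w.r.t. the fixed-window frequency. -/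
noncomputable def FClosedF (s : List α) (ρ : ℕ) (G : Episode α) : Prop :=
  ¬ ∃ H : Episode α, inS H ∧ ProperSubep G H ∧ freqF s ρ H = freqF s ρ G

/-- `G` is f-closed w.r.t. the disjoint-window frequency. -/
noncomputable def FClosedD (s : List α) (ρ : ℕ) (G : Episode α) : Prop :=
  ¬ ∃ H : Episode α, inS H ∧ ProperSubep G H ∧ freqD s ρ H = freqD s ρ G

/-- `G − e`: remove an edge. -/
def eraseEdge (G : Episode α) (e : ℕ × ℕ) : Episode α where
  nodes := G.nodes
  edge := fun x y => G.edge x y ∧ (x, y) ≠ e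
  lab := G.lab
  edge_mem := by rintro x y ⟨h, -⟩; exact G.edge_mem h

/-- `G − v`: remove a node together with all incident edges. -/
def eraseNode (G : Episode α) (w : ℕ) : Episode α where
  nodes := G.nodes.erase w
  edge := fun x y => G.edge x y ∧ x ≠ w ∧ y ≠ w
  lab := G.lab
  edge_mem := by
    rintro x y ⟨h, hx, hy⟩
    exact ⟨Finset.mem_erase.mpr ⟨hx, (G.edge_mem h).1⟩,
      Finset.mem_erase.mpr ⟨hy, (G.edge_mem h).2⟩⟩

/-- `G + e`: add an edge. -/
def addEdge (G : Episode α) (e : ℕ × ℕ) : Episode α where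
  nodes := G.nodes ∪ {e.1, e.2}
  edge := fun x y => G.edge x y ∨ (x, y) = e
  lab := G.lab
  edge_mem := by
    rintro x y (h | h)
    · exact ⟨Finset.mem_union_left _ (G.edge_mem h).1,
        Finset.mem_union_left _ (G.edge_mem h).2⟩
    · cases h
      exact ⟨Finset.mem_union_right _ (by simp), Finset.mem_union_right _ (by simp)⟩

/-- A skeleton edge: an edge `(v,w)` such that there is no two-step path
`v → u → w`. -/
def IsSkeletonEdge (G : Episode α) (e : ℕ × ℕ) : Prop :=
  G.edge e.1 e.2 ∧ ¬ ∃ u, G.edge e.1 u ∧ G.edge u e.2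

/-- A proper skeleton edge: a skeleton edge whose endpoints carry different
labels. -/
def IsProperSkeletonEdge (G : Episode α) (e : ℕ × ℕ) : Prop :=
  IsSkeletonEdge G e ∧ G.lab e.1 ≠ G.lab e.2

/-- The set of edges of `G`, as a set of pairs. -/
def edgeSet (G : Episode α) : Set (ℕ × ℕ) := {p | G.edge p.1 p.2}

/-- Lexicographic order on edges (using the canonical order of the nodes). -/
def edgeLT (e f : ℕ × ℕ) : Prop := e.1 < f.1 ∨ (e.1 = f.1 ∧ e.2 < f.2)

/-- `e` is the last (lexicographically largest) proper skeleton edge of `G`. -/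
def IsLastEdge (G : Episode α) (e : ℕ × ℕ) : Prop :=
  IsProperSkeletonEdge G e ∧
    ∀ f, IsProperSkeletonEdge G f → f = e ∨ edgeLT f e

/-- A solitary node: a node with no incident edges. -/
def Solitary (G : Episode α) (v : ℕ) : Prop :=
  v ∈ G.nodes ∧ ∀ u, ¬ G.edge u v ∧ ¬ G.edge v u

/-- A source node: a node with no incoming edges. -/
def IsSource (G : Episode α) (v : ℕ) : Prop := v ∈ G.nodes ∧ ∀ u, ¬ G.edge u v

/-- A proper skeleton edge `e` of `G` is derivable if `G ⪯ icl(G − e)`. -/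
noncomputable def DerivableEdge [LinearOrder α] (s : List α) (ρ : ℕ)
    (G : Episode α) (e : ℕ × ℕ) : Prop :=
  IsProperSkeletonEdge G e ∧ Subep G (icl s ρ (G.eraseEdge e))

/-- A solitary node `v` of `G` is derivable if `G ⪯ icl(G − v)`. -/
noncomputable def DerivableNode [LinearOrder α] (s : List α) (ρ : ℕ)
    (G : Episode α) (v : ℕ) : Prop :=
  Solitary G v ∧ Subep G (icl s ρ (G.eraseNode v))

/-- `GreedyFrom s t G f`: `f` is the greedy mapping of `G` in the suffix of `s`
starting at (0-based) position `t`, recording absolute indices of `s`: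
repeatedly map the source node of `G` whose label has the earliest remaining
occurrence to that position, and recurse on the episode with that node
removed and the part of the sequence after that position. -/
inductive GreedyFrom (s : List α) : ℕ → Episode α → (ℕ → ℕ) → Prop
  | empty (t : ℕ) (G : Episode α) (f : ℕ → ℕ) (hG : G.nodes = ∅) :
      GreedyFrom s t G f
  | step (t : ℕ) (G : Episode α) (f : ℕ → ℕ) (v k : ℕ)
      (hv : G.IsSource v) (ht : t ≤ k) (hk : k < s.length)
      (hlab : s.get ⟨k, hk⟩ = G.lab v)
      (hmin : ∀ j (hj : j < s.length), t ≤ j → j < k →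
        ¬ ∃ w, G.IsSource w ∧ s.get ⟨j, hj⟩ = G.lab w)
      (hfv : f v = k)
      (hrec : GreedyFrom s (k + 1) (G.eraseNode v) f) :
      GreedyFrom s t G f

/-- One step of removing a derivable proper skeleton edge or a derivable
solitary node. -/
noncomputable def RemStep [LinearOrder α] (s : List α) (ρ : ℕ) :
    Episode α → Episode α → Prop := fun G G' =>
  (∃ e, DerivableEdge s ρ G e ∧ G' = G.eraseEdge e) ∨
  (∃ v, DerivableNode s ρ G v ∧ G' = G.eraseNode v)

end Episode

/-!
Strict episodes are rigid: if `G ⪯ K` with `G, K ∈ 𝒮` of the same size, then `G` embeds into `K`.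
Indeed, the label map read off from a linear extension of `K` is forced, inside each label class,
rank by rank, so it cannot depend on the extension and must respect every edge of `G`. With
embeddings, `⪯` composes and `icl` is monotone: an embedding `G → icl K` extends to
`icl G → icl K`. A removal step lowers the number of nodes plus edges, so some chain of steps from
`H` ends in an `F` with nothing derivable left. Each step `G → G₁` has `G ⪯ icl G₁`; these compose
to `H ⪯ icl F`, and they show that an edge or node which is not derivable in `G` is not derivable
in `G₁` either, so it is never removed.
-/

theorem IsStrictOrder.exists_equiv_fin {β : Type*} [Fintype β] (r : β → β → Prop)
    [IsStrictOrder β r] : ∃ σ : β ≃ Fin (Fintype.card β), ∀ a b, r a b → σ a < σ b := by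
  let _ : PartialOrder β := partialOrderOfSO r
  let _ : Fintype (LinearExtension β) := ‹Fintype β›
  let e := (Fintype.orderIsoFinOfCardEq (LinearExtension β) rfl).symm
  refine ⟨e.toEquiv, fun a b hab => e.strictMono ?_⟩
  have hlt : a < b := hab
  exact (toLinearExtension.monotone hlt.le).lt_of_ne hlt.ne

theorem IsStrictOrder.exists_equiv_fin_of_not_rel {β : Type*} [Fintype β]
    (r : β → β → Prop) [IsStrictOrder β r] {a b : β} (hne : a ≠ b) (hab : ¬ r a b) :
    ∃ σ : β ≃ Fin (Fintype.card β), (∀ x y, r x y → σ x < σ y) ∧ σ b < σ a := by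
  let _ : PartialOrder β := partialOrderOfSO r
  have hab' : ¬ a ≤ b := by rintro (h | h) <;> contradiction
  let r' : β → β → Prop := fun x y => x < y ∨ (x ≤ b ∧ a ≤ y)
  have : IsStrictOrder β r' :=
    { irrefl := by
        rintro x (h | ⟨hxb, hax⟩)
        exacts [lt_irrefl x h, hab' (hax.trans hxb)]
      trans := by
        rintro x y z (hxy | ⟨hxb, hay⟩) (hyz | ⟨hyb, haz⟩)
        exacts [.inl (hxy.trans hyz), .inr ⟨hxy.le.trans hyb, haz⟩,
          .inr ⟨hxb, hay.trans hyz.le⟩, (hab' (hay.trans hyb)).elim] }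
  obtain ⟨σ, hσ⟩ := IsStrictOrder.exists_equiv_fin r'
  exact ⟨σ, fun x y h => hσ x y (.inl h), hσ b a (.inr ⟨le_rfl, le_rfl⟩)⟩

namespace Episode

variable {α : Type*}

section Embeddings

variable {G H K : Episode α}

def Embeds (G K : Episode α) : Prop :=
  ∃ φ : {v // v ∈ G.nodes} → {v // v ∈ K.nodes},
    Function.Injective φ ∧ (∀ v, K.lab (φ v).1 = G.lab v.1) ∧
      ∀ u v, G.edge u.1 v.1 → K.edge (φ u).1 (φ v).1

theorem Embeds.trans (hGH : Embeds G H) (hHK : Embeds H K) : Embeds G K := by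
  obtain ⟨φ, hφi, hφl, hφe⟩ := hGH
  obtain ⟨ψ, hψi, hψl, hψe⟩ := hHK
  exact ⟨ψ ∘ φ, hψi.comp hφi, fun v => (hψl _).trans (hφl v),
    fun u v h => hψe _ _ (hφe _ _ h)⟩

theorem Embeds.subep (h : Embeds G K) : Subep G K := by
  obtain ⟨φ, hφi, hφl, hφe⟩ := h
  let U := G.nodes.attach.image fun v => (φ v).1
  have hmem : ∀ v, (φ v).1 ∈ U := fun v => Finset.mem_image_of_mem _ (Finset.mem_attach _ v)
  refine ⟨U, ?_, ?_, ?_⟩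
  · simp only [U, Finset.image_subset_iff]
    exact fun v _ => (φ v).2
  · rw [Finset.card_image_of_injective _ (fun a b h => hφi (Subtype.ext h)), Finset.card_attach]
  · rintro t ⟨g, hgi, hgl, hge⟩
    refine ⟨fun v => g ⟨(φ v).1, hmem v⟩, fun a b hab => hφi (Subtype.ext ?_),
      fun v => (hgl _).trans (hφl v), fun u v huv => hge _ _ ⟨hmem u, hmem v, hφe _ _ huv⟩⟩
    exact Subtype.mk_eq_mk.1 (hgi hab)

def IsSubgraph (G K : Episode α) : Prop :=
  G.nodes ⊆ K.nodes ∧ (∀ ⦃x y⦄, G.edge x y → K.edge x y) ∧ G.lab = K.lab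

theorem IsSubgraph.refl (G : Episode α) : IsSubgraph G G := ⟨subset_rfl, fun _ _ h => h, rfl⟩

theorem IsSubgraph.trans (hGH : IsSubgraph G H) (hHK : IsSubgraph H K) : IsSubgraph G K :=
  ⟨hGH.1.trans hHK.1, fun _ _ h => hHK.2.1 (hGH.2.1 h), hGH.2.2.trans hHK.2.2⟩

theorem IsSubgraph.embeds (h : IsSubgraph G K) : Embeds G K :=
  ⟨fun v => ⟨v.1, h.1 v.2⟩, fun _ _ hab => Subtype.ext (Subtype.mk_eq_mk.1 hab),
    fun v => congrFun h.2.2.symm v.1, fun _ _ huv => h.2.1 huv⟩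

theorem isSubgraph_eraseEdge (G : Episode α) (e : ℕ × ℕ) : IsSubgraph (G.eraseEdge e) G :=
  ⟨subset_rfl, fun _ _ h => h.1, rfl⟩

theorem isSubgraph_eraseNode (G : Episode α) (w : ℕ) : IsSubgraph (G.eraseNode w) G :=
  ⟨Finset.erase_subset _ _, fun _ _ h => h.1, rfl⟩

theorem IsSubgraph.eraseEdge (h : IsSubgraph G K) (e : ℕ × ℕ) :
    IsSubgraph (G.eraseEdge e) (K.eraseEdge e) :=
  ⟨h.1, fun _ _ hxy => ⟨h.2.1 hxy.1, hxy.2⟩, h.2.2⟩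

theorem IsSubgraph.eraseNode (h : IsSubgraph G K) (w : ℕ) :
    IsSubgraph (G.eraseNode w) (K.eraseNode w) :=
  ⟨Finset.erase_subset_erase _ h.1, fun _ _ hxy => ⟨h.2.1 hxy.1, hxy.2⟩, h.2.2⟩

theorem IsProperSkeletonEdge.of_isSubgraph {e : ℕ × ℕ} (hGK : IsSubgraph G K)
    (he : IsProperSkeletonEdge K e) (hG : G.edge e.1 e.2) : IsProperSkeletonEdge G e :=
  ⟨⟨hG, fun ⟨u, h₁, h₂⟩ => he.1.2 ⟨u, hGK.2.1 h₁, hGK.2.1 h₂⟩⟩, hGK.2.2 ▸ he.2⟩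

theorem Solitary.of_isSubgraph {v : ℕ} (hGK : IsSubgraph G K) (hv : Solitary K v)
    (hG : v ∈ G.nodes) : Solitary G v :=
  ⟨hG, fun u => ⟨fun h => (hv.2 u).1 (hGK.2.1 h), fun h => (hv.2 u).2 (hGK.2.1 h)⟩⟩

end Embeddings

section StrictEpisodes

variable {G K : Episode α}

theorem inS.not_edge_self (hG : inS G) (v : ℕ) : ¬ G.edge v v :=
  fun h => hG.1 v (.single h)

theorem inS.edge_trans (hG : inS G) {u v w : ℕ} (huv : G.edge u v) (hvw : G.edge v w) :
    G.edge u w :=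
  hG.2.1 (.tail (.single huv) hvw)

theorem inS.edge_or_edge_of_lab_eq (hG : inS G) {u v : ℕ} (hu : u ∈ G.nodes)
    (hv : v ∈ G.nodes) (hne : u ≠ v) (hlab : G.lab u = G.lab v) :
    G.edge u v ∨ G.edge v u :=
  (hG.2.2 u hu v hv hne hlab).imp (fun h => hG.2.1 h) (fun h => hG.2.1 h)

theorem inS_restrict (hK : inS K) {U : Finset ℕ} (hU : U ⊆ K.nodes) : inS (K.restrict U) := by
  have hpath : ∀ {u v}, Relation.TransGen (K.restrict U).edge u v →
      u ∈ U ∧ v ∈ U ∧ K.edge u v := by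
    intro u v h
    induction h with
    | single h => exact h
    | tail _ h ih => exact ⟨ih.1, h.2.1, hK.edge_trans ih.2.2 h.2.2⟩
  refine ⟨fun v hv => hK.not_edge_self v (hpath hv).2.2, fun u v h => hpath h, ?_⟩
  intro u hu v hv hne hlab
  exact (hK.edge_or_edge_of_lab_eq (hU hu) (hU hv) hne hlab).imp
    (fun h => .single ⟨hu, hv, h⟩) (fun h => .single ⟨hv, hu, h⟩)

/-- Removing a skeleton edge keeps transitive closure; removing a proper one keeps strictness. -/
theorem inS_eraseEdge (hG : inS G) {e : ℕ × ℕ} (he : IsProperSkeletonEdge G e) :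
    inS (G.eraseEdge e) := by
  have hpath : ∀ {u v}, Relation.TransGen (G.eraseEdge e).edge u v → (G.eraseEdge e).edge u v := by
    intro u v h
    induction h with
    | single h => exact h
    | tail _ h ih =>
      refine ⟨hG.edge_trans ih.1 h.1, fun huv => he.1.2 ?_⟩
      cases huv
      exact ⟨_, ih.1, h.1⟩
  refine ⟨fun v hv => hG.not_edge_self v (hpath hv).1, fun u v h => hpath h, ?_⟩
  intro u hu v hv hne hlab
  have hlab_ne : ∀ {x y}, (x, y) = e → G.lab x ≠ G.lab y := by
    rintro x y rfl
    exact he.2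
  exact (hG.edge_or_edge_of_lab_eq hu hv hne hlab).imp
    (fun h => .single ⟨h, fun h' => hlab_ne h' hlab⟩)
    (fun h => .single ⟨h, fun h' => hlab_ne h' hlab.symm⟩)

theorem inS_eraseNode (hG : inS G) (w : ℕ) : inS (G.eraseNode w) := by
  have hpath : ∀ {u v}, Relation.TransGen (G.eraseNode w).edge u v → (G.eraseNode w).edge u v := by
    intro u v h
    induction h with
    | single h => exact h
    | tail _ h ih => exact ⟨hG.edge_trans ih.1 h.1, ih.2.1, h.2.2⟩
  refine ⟨fun v hv => hG.not_edge_self v (hpath hv).1, fun u v h => hpath h, ?_⟩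
  intro u hu v hv hne hlab
  obtain ⟨huw, hu⟩ := Finset.mem_erase.1 hu
  obtain ⟨hvw, hv⟩ := Finset.mem_erase.1 hv
  exact (hG.edge_or_edge_of_lab_eq hu hv hne hlab).imp
    (fun h => .single ⟨h, huw, hvw⟩) (fun h => .single ⟨h, hvw, huw⟩)

end StrictEpisodes

section Rigidity

variable {G K : Episode α}

/-- The position of `v` in the chain of nodes sharing its label. -/
noncomputable def labRank (G : Episode α) (v : ℕ) : ℕ :=
  (G.nodes.filter fun u => G.lab u = G.lab v ∧ G.edge u v).card

theorem labRank_lt_labRank (hG : inS G) {a b : ℕ} (hab : G.edge a b) (hlab : G.lab a = G.lab b) :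
    labRank G a < labRank G b := by
  refine Finset.card_lt_card ((Finset.ssubset_iff_of_subset ?_).2 ⟨a, ?_, ?_⟩)
  · intro u hu
    simp only [Finset.mem_filter] at hu ⊢
    exact ⟨hu.1, hu.2.1.trans hlab, hG.edge_trans hu.2.2 hab⟩
  · exact Finset.mem_filter.2 ⟨(G.edge_mem hab).1, hlab, hab⟩
  · exact fun ha => hG.not_edge_self a (Finset.mem_filter.1 ha).2.2

theorem eq_of_labRank_eq (hG : inS G) {a b : ℕ} (ha : a ∈ G.nodes) (hb : b ∈ G.nodes)
    (hlab : G.lab a = G.lab b) (hrank : labRank G a = labRank G b) : a = b := by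
  by_contra hne
  rcases hG.edge_or_edge_of_lab_eq ha hb hne hlab with h | h
  · exact (labRank_lt_labRank hG h hlab).ne hrank
  · exact (labRank_lt_labRank hG h hlab.symm).ne' hrank

def PreservesLabelChains (G K : Episode α) (χ : {v // v ∈ G.nodes} → {v // v ∈ K.nodes}) :
    Prop :=
  ∀ u v, G.lab u.1 = G.lab v.1 → G.edge u.1 v.1 → K.edge (χ u).1 (χ v).1

theorem labRank_map (hG : inS G) (hK : inS K) {χ : {v // v ∈ G.nodes} → {v // v ∈ K.nodes}}
    (hχ : Function.Bijective χ) (hlab : ∀ v, K.lab (χ v).1 = G.lab v.1)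
    (hchain : ∀ u v, G.lab u.1 = G.lab v.1 → G.edge u.1 v.1 → K.edge (χ u).1 (χ v).1)
    (u : {v // v ∈ G.nodes}) : labRank G u.1 = labRank K (χ u).1 := by
  refine Finset.card_bij (fun a ha => (χ ⟨a, (Finset.mem_filter.1 ha).1⟩).1) ?_ ?_ ?_
  · intro a ha
    obtain ⟨ha, hau, he⟩ := Finset.mem_filter.1 ha
    refine Finset.mem_filter.2 ⟨(χ _).2, ?_, hchain ⟨a, ha⟩ u hau he⟩
    rw [hlab, hlab, hau]
  · intro a₁ ha₁ a₂ ha₂ h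
    exact Subtype.mk_eq_mk.1 (hχ.1 (Subtype.ext h))
  · intro b hb
    obtain ⟨hb, hbu, he⟩ := Finset.mem_filter.1 hb
    obtain ⟨w, hw⟩ := hχ.2 ⟨b, hb⟩
    have hwu : G.lab w.1 = G.lab u.1 := by
      rw [← hlab, ← hlab, hw]
      exact hbu
    have hne : w ≠ u := by
      rintro rfl
      exact hK.not_edge_self _ (hw ▸ he)
    refine ⟨w.1, Finset.mem_filter.2 ⟨w.2, hwu, ?_⟩, congrArg Subtype.val hw⟩
    refine (hG.edge_or_edge_of_lab_eq w.2 u.2 (Subtype.coe_ne_coe.2 hne) hwu).resolve_right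
      fun h => hK.not_edge_self b (hK.edge_trans he ?_)
    simpa [hw] using hchain u w hwu.symm h

/-- By counting, both maps are bijective, so each sends the `k`-th node of a label chain of `G`
to the `k`-th node of the same label chain of `K`. -/
theorem eq_of_preservesLabelChains (hG : inS G) (hK : inS K)
    (hcard : K.nodes.card = G.nodes.card) {χ₁ χ₂ : {v // v ∈ G.nodes} → {v // v ∈ K.nodes}}
    (hinj₁ : Function.Injective χ₁) (hlab₁ : ∀ v, K.lab (χ₁ v).1 = G.lab v.1)
    (hchain₁ : PreservesLabelChains G K χ₁)
    (hinj₂ : Function.Injective χ₂) (hlab₂ : ∀ v, K.lab (χ₂ v).1 = G.lab v.1)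
    (hchain₂ : PreservesLabelChains G K χ₂) :
    χ₁ = χ₂ := by
  have hbij : ∀ χ : {v // v ∈ G.nodes} → {v // v ∈ K.nodes}, Function.Injective χ →
      Function.Bijective χ := fun χ hχ =>
    (Fintype.bijective_iff_injective_and_card χ).2 ⟨hχ, by simp [hcard]⟩
  funext u
  refine Subtype.ext (eq_of_labRank_eq hK (χ₁ u).2 (χ₂ u).2 (by rw [hlab₁, hlab₂]) ?_)
  rw [← labRank_map hG hK (hbij χ₁ hinj₁) hlab₁ hchain₁,
    ← labRank_map hG hK (hbij χ₂ hinj₂) hlab₂ hchain₂]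

theorem covers_ofFn {n : ℕ} (σ : {v // v ∈ K.nodes} ≃ Fin n)
    (hσ : ∀ u v, K.edge u.1 v.1 → σ u < σ v) :
    Covers (List.ofFn fun i => K.lab (σ.symm i).1) K :=
  ⟨fun v => Fin.cast List.length_ofFn.symm (σ v),
    fun a b h => σ.injective (Fin.cast_injective _ h),
    fun v => by simp,
    fun u v h => hσ u v h⟩

/-- Reading the labels of `K` along a linear extension `σ` gives a sequence covering `K`, hence
`G`; a covering map of `G` into it is a label map `G → K` that follows `σ` along the edges. -/
theorem exists_labelMap_of_covers {n : ℕ} (hcov : ∀ t, Covers t K → Covers t G)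
    (σ : {v // v ∈ K.nodes} ≃ Fin n) (hσ : ∀ u v, K.edge u.1 v.1 → σ u < σ v) :
    ∃ χ : {v // v ∈ G.nodes} → {v // v ∈ K.nodes}, Function.Injective χ ∧
      (∀ v, K.lab (χ v).1 = G.lab v.1) ∧ ∀ u v, G.edge u.1 v.1 → σ (χ u) < σ (χ v) := by
  obtain ⟨ψ, hψi, hψl, hψe⟩ := hcov _ (covers_ofFn σ hσ)
  refine ⟨fun v => σ.symm (Fin.cast List.length_ofFn (ψ v)),
    fun a b h => hψi (Fin.cast_injective _ (σ.symm.injective h)), fun v => ?_,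
    fun u v h => by simpa using hψe u v h⟩
  rw [← hψl v, List.get_ofFn]

theorem preservesLabelChains_of_lt (hK : inS K) {n : ℕ} {σ : {v // v ∈ K.nodes} ≃ Fin n}
    (hσ : ∀ u v, K.edge u.1 v.1 → σ u < σ v) {χ : {v // v ∈ G.nodes} → {v // v ∈ K.nodes}}
    (hlab : ∀ v, K.lab (χ v).1 = G.lab v.1) (hlt : ∀ u v, G.edge u.1 v.1 → σ (χ u) < σ (χ v)) :
    PreservesLabelChains G K χ := by
  intro u v huv he
  have hne : (χ u).1 ≠ (χ v).1 := fun h => (hlt u v he).ne (congrArg σ (Subtype.ext h))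
  refine (hK.edge_or_edge_of_lab_eq (χ u).2 (χ v).2 hne (by rw [hlab, hlab, huv])).resolve_right
    fun h => (hlt u v he).not_gt (hσ _ _ h)

theorem inS.isStrictOrder_edge (hK : inS K) :
    IsStrictOrder {v // v ∈ K.nodes} fun a b => K.edge a.1 b.1 :=
  { irrefl := fun a => hK.not_edge_self a.1
    trans := fun _ _ _ => hK.edge_trans }

/-- The label map obtained from a linear extension of `K` does not depend on the extension; if
it missed an edge `u → v` of `G`, a linear extension putting the image of `v` first would
contradict that. -/
theorem embeds_of_covers (hG : inS G) (hK : inS K) (hcard : K.nodes.card = G.nodes.card)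
    (hcov : ∀ t, Covers t K → Covers t G) : Embeds G K := by
  have := hK.isStrictOrder_edge
  obtain ⟨σ₁, hσ₁⟩ := IsStrictOrder.exists_equiv_fin fun a b : {v // v ∈ K.nodes} =>
    K.edge a.1 b.1
  obtain ⟨χ, hinj, hlab, hlt₁⟩ := exists_labelMap_of_covers hcov σ₁ hσ₁
  refine ⟨χ, hinj, hlab, fun u v he => ?_⟩
  by_contra hnot
  obtain ⟨σ₂, hσ₂, hvu⟩ := IsStrictOrder.exists_equiv_fin_of_not_rel
    (fun a b : {v // v ∈ K.nodes} => K.edge a.1 b.1)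
    (fun h => (hlt₁ u v he).ne (congrArg σ₁ h)) hnot
  obtain ⟨χ₂, hinj₂, hlab₂, hlt₂⟩ := exists_labelMap_of_covers hcov σ₂ hσ₂
  have hχ : χ₂ = χ := eq_of_preservesLabelChains hG hK hcard hinj₂ hlab₂
    (preservesLabelChains_of_lt hK hσ₂ hlab₂ hlt₂) hinj hlab
    (preservesLabelChains_of_lt hK hσ₁ hlab hlt₁)
  exact (hlt₂ u v he).not_gt (hχ ▸ hvu)

theorem Subep.embeds (hG : inS G) (hK : inS K) (h : Subep G K) : Embeds G K := by
  obtain ⟨U, hU, hcard, hcov⟩ := h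
  refine (embeds_of_covers hG (inS_restrict hK hU) hcard hcov).trans ?_
  exact IsSubgraph.embeds ⟨hU, fun _ _ h => h.2.2, rfl⟩

end Rigidity

section Occurrences

variable {s : List α} {ρ : ℕ} {G K : Episode α}

theorem IsOcc.comp {f : {v // v ∈ K.nodes} → Fin s.length} (hf : IsOcc s ρ K f)
    {φ : {v // v ∈ G.nodes} → {v // v ∈ K.nodes}} (hφ : Function.Injective φ)
    (hlab : ∀ v, K.lab (φ v).1 = G.lab v.1)
    (hedge : ∀ u v, G.edge u.1 v.1 → f (φ u) < f (φ v)) : IsOcc s ρ G (f ∘ φ) :=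
  ⟨hf.1.comp hφ, fun v => (hf.2.1 _).trans (hlab v), hedge, fun _ _ => hf.2.2.2 _ _⟩

theorem Occurs.of_isSubgraph (hGK : IsSubgraph G K) (h : Occurs s ρ K) : Occurs s ρ G := by
  obtain ⟨f, hf⟩ := h
  obtain ⟨φ, hφi, hφl, hφe⟩ := hGK.embeds
  exact ⟨_, hf.comp hφi hφl fun u v h => hf.2.2.1 _ _ (hφe u v h)⟩

end Occurrences

/-- The `i`-th new node of `clN s ρ G` is `freshBase G + i`. -/
def freshBase (G : Episode α) : ℕ := G.nodes.sup id + 1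

theorem freshBase_add_notMem (G : Episode α) (i : ℕ) : freshBase G + i ∉ G.nodes := fun h => by
  have := Finset.le_sup (f := id) h
  simp only [id_eq, freshBase] at this
  omega

section Closure

variable [LinearOrder α] {s : List α} {ρ : ℕ} {G K : Episode α}

/-- The labels `clN` adds, in the order of their new nodes. -/
noncomputable def newLabs (s : List α) (ρ : ℕ) (G : Episode α) : List α :=
  (s.toFinset.filter (fun x => (∀ f, IsOcc s ρ G f → SymInWindow s f x) ∧
    ∀ v ∈ G.nodes, G.lab v ≠ x)).sort (· ≤ ·)

theorem mem_newLabs {x : α} : x ∈ newLabs s ρ G ↔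
    x ∈ s.toFinset ∧ (∀ f, IsOcc s ρ G f → SymInWindow s f x) ∧ ∀ v ∈ G.nodes, G.lab v ≠ x := by
  rw [newLabs, Finset.mem_sort, Finset.mem_filter]

theorem mem_clN_nodes {v : ℕ} : v ∈ (clN s ρ G).nodes ↔
    v ∈ G.nodes ∨ ∃ i < (newLabs s ρ G).length, v = freshBase G + i := by
  change v ∈ G.nodes ∪ _ ↔ _
  simp only [Finset.mem_union, Finset.mem_image, Finset.mem_range, eq_comm (a := v)]
  rfl

theorem clN_lab_of_mem {v : ℕ} (hv : v ∈ G.nodes) : (clN s ρ G).lab v = G.lab v :=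
  dif_neg fun h => h.2.2 hv

theorem clN_lab_freshBase_add {i : ℕ} (hi : i < (newLabs s ρ G).length) :
    (clN s ρ G).lab (freshBase G + i) = (newLabs s ρ G)[i] := by
  have h : freshBase G ≤ freshBase G + i ∧ freshBase G + i - freshBase G < (newLabs s ρ G).length
      ∧ freshBase G + i ∉ G.nodes := ⟨by omega, by omega, freshBase_add_notMem G i⟩
  refine (dif_pos h).trans ?_
  simp only [freshBase, Nat.add_sub_cancel_left]
  rfl

theorem clN_lab_mem_newLabs {v : ℕ} (hv : v ∈ (clN s ρ G).nodes) (hvG : v ∉ G.nodes) :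
    (clN s ρ G).lab v ∈ newLabs s ρ G := by
  obtain hv | ⟨i, hi, rfl⟩ := mem_clN_nodes.1 hv
  · exact absurd hv hvG
  · rw [clN_lab_freshBase_add hi]
    exact List.getElem_mem hi

theorem eq_of_clN_lab_eq {u v : ℕ} (hu : u ∈ (clN s ρ G).nodes) (hv : v ∈ (clN s ρ G).nodes)
    (hvG : v ∉ G.nodes) (hlab : (clN s ρ G).lab u = (clN s ρ G).lab v) : u = v := by
  have hnew := clN_lab_mem_newLabs hv hvG
  obtain ⟨j, hj, rfl⟩ := (mem_clN_nodes.1 hv).resolve_left hvG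
  obtain hu | ⟨i, hi, rfl⟩ := mem_clN_nodes.1 hu
  · rw [clN_lab_of_mem hu] at hlab
    exact absurd hlab ((mem_newLabs.1 hnew).2.2 u hu)
  · rw [clN_lab_freshBase_add hi, clN_lab_freshBase_add hj] at hlab
    rw [(Finset.sort_nodup _ _).getElem_inj_iff.1 hlab]

theorem exists_clN_lab_eq {x : α} (hx : x ∈ newLabs s ρ G) :
    ∃ v ∈ (clN s ρ G).nodes, (clN s ρ G).lab v = x := by
  obtain ⟨i, hi, rfl⟩ := List.getElem_of_mem hx
  exact ⟨freshBase G + i, mem_clN_nodes.2 (.inr ⟨i, hi, rfl⟩), clN_lab_freshBase_add hi⟩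

/-- Injectivity comes for free: new labels are pairwise distinct and do not occur in `G`. -/
theorem exists_clN_extension {β : Type*} (lab' : β → α) {f : {v // v ∈ G.nodes} → β}
    (hf : Function.Injective f) (hfl : ∀ v, lab' (f v) = G.lab v.1) (P : β → Prop)
    (hP : ∀ x ∈ newLabs s ρ G, ∃ b, P b ∧ lab' b = x) :
    ∃ g : {v // v ∈ (clN s ρ G).nodes} → β, Function.Injective g ∧
      (∀ v, lab' (g v) = (clN s ρ G).lab v.1) ∧
      (∀ v (hv : v.1 ∈ G.nodes), g v = f ⟨v.1, hv⟩) ∧ ∀ v, v.1 ∉ G.nodes → P (g v) := by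
  have hnew : ∀ v : {v // v ∈ (clN s ρ G).nodes}, v.1 ∉ G.nodes →
      ∃ b, P b ∧ lab' b = (clN s ρ G).lab v.1 :=
    fun v hv => hP _ (clN_lab_mem_newLabs v.2 hv)
  choose κ hκ using hnew
  let g : {v // v ∈ (clN s ρ G).nodes} → β := fun v =>
    if h : v.1 ∈ G.nodes then f ⟨v.1, h⟩ else κ v h
  have hlab : ∀ v, lab' (g v) = (clN s ρ G).lab v.1 := by
    intro v
    by_cases h : v.1 ∈ G.nodes
    · simp only [g, dif_pos h, hfl, clN_lab_of_mem h]
    · simp only [g, dif_neg h, (hκ v h).2]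
  refine ⟨g, fun a b hab => ?_, hlab, fun v hv => dif_pos hv, fun v hv => ?_⟩
  · have hlabeq : (clN s ρ G).lab a.1 = (clN s ρ G).lab b.1 := by rw [← hlab, ← hlab, hab]
    by_cases ha : a.1 ∈ G.nodes
    · by_cases hb : b.1 ∈ G.nodes
      · simp only [g, dif_pos ha, dif_pos hb] at hab
        exact Subtype.ext (Subtype.mk_eq_mk.1 (hf hab))
      · exact Subtype.ext (eq_of_clN_lab_eq a.2 b.2 hb hlabeq)
    · exact (Subtype.ext (eq_of_clN_lab_eq b.2 a.2 ha hlabeq.symm)).symm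
  · simp only [g, dif_neg hv]
    exact (hκ v hv).1

theorem exists_clN_occ {f : {v // v ∈ G.nodes} → Fin s.length} (hf : IsOcc s ρ G f) :
    ∃ g, IsOcc s ρ (clN s ρ G) g ∧ ∀ v, (∃ a, f a ≤ g v) ∧ ∃ b, g v ≤ f b := by
  obtain ⟨g, hinj, hlab, hold, hnew⟩ := exists_clN_extension s.get hf.1 hf.2.1
    (fun j => (∃ a, f a ≤ j) ∧ ∃ b, j ≤ f b) fun x hx => by
      obtain ⟨j, hj, ha, hb⟩ := (mem_newLabs.1 hx).2.1 f hf
      exact ⟨j, ⟨ha, hb⟩, hj⟩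
  have hwin : ∀ v, (∃ a, f a ≤ g v) ∧ ∃ b, g v ≤ f b := by
    intro v
    by_cases hv : v.1 ∈ G.nodes
    · rw [hold v hv]
      exact ⟨⟨_, le_rfl⟩, ⟨_, le_rfl⟩⟩
    · exact hnew v hv
  refine ⟨g, ⟨hinj, hlab, fun u v he => ?_, fun u v => ?_⟩, hwin⟩
  · have he' : G.edge u.1 v.1 := he
    rw [hold u (G.edge_mem he').1, hold v (G.edge_mem he').2]
    exact hf.2.2.1 _ _ he'
  · obtain ⟨-, b, hb⟩ := hwin u
    obtain ⟨⟨a, ha⟩, -⟩ := hwin v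
    have := hf.2.2.2 b a
    have : (g u : ℕ) ≤ f b := hb
    have : (f a : ℕ) ≤ g v := ha
    omega

theorem Occurs.clN (h : Occurs s ρ G) : Occurs s ρ (clN s ρ G) := by
  obtain ⟨f, hf⟩ := h
  obtain ⟨g, hg, -⟩ := exists_clN_occ hf
  exact ⟨g, hg⟩

theorem icl_edge_of_edge {x y : ℕ} (h : G.edge x y) : (icl s ρ G).edge x y :=
  ⟨mem_clN_nodes.2 (.inl (G.edge_mem h).1), mem_clN_nodes.2 (.inl (G.edge_mem h).2),
    fun _ hg => hg.2.2.1 _ _ h⟩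

theorem embeds_icl (G : Episode α) : Embeds G (icl s ρ G) :=
  ⟨fun v => ⟨v.1, mem_clN_nodes.2 (.inl v.2)⟩, fun _ _ h => Subtype.ext (Subtype.mk_eq_mk.1 h),
    fun v => clN_lab_of_mem v.2, fun _ _ h => icl_edge_of_edge h⟩

theorem inS_icl (hG : inS G) (hocc : Occurs s ρ G) : inS (icl s ρ G) := by
  have htc : (icl s ρ G).TransClosed := by
    intro u v h
    induction h with
    | single h => exact h
    | tail _ h ih =>
      obtain ⟨hu, _, huv⟩ := ih
      obtain ⟨_, hw, hvw⟩ := h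
      exact ⟨hu, hw, fun g hg => (huv g hg).trans (hvw g hg)⟩
  refine ⟨fun v hv => ?_, htc, fun u hu v hv hne hlab => ?_⟩
  · obtain ⟨g, hg⟩ := hocc.clN
    obtain ⟨_, _, h⟩ := htc hv
    exact lt_irrefl _ (h g hg)
  · by_cases hvG : v ∈ G.nodes
    · by_cases huG : u ∈ G.nodes
      · change (clN s ρ G).lab u = (clN s ρ G).lab v at hlab
        rw [clN_lab_of_mem huG, clN_lab_of_mem hvG] at hlab
        exact (hG.edge_or_edge_of_lab_eq huG hvG hne hlab).imp
          (fun h => .single (icl_edge_of_edge h)) (fun h => .single (icl_edge_of_edge h))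
      · exact absurd (eq_of_clN_lab_eq hv hu huG hlab.symm) hne.symm
    · exact absurd (eq_of_clN_lab_eq hu hv hvG hlab) hne

/-- A symbol lying in every window of `G` lies in every window of `K`: the occurrences of `clN K`
built from an occurrence of `K` stay in its window and restrict to occurrences of `G`. -/
theorem exists_clN_lab_eq_of_isOcc_comp {φ : {v // v ∈ G.nodes} → {v // v ∈ (clN s ρ K).nodes}}
    (hocc : ∀ g, IsOcc s ρ (clN s ρ K) g → IsOcc s ρ G (g ∘ φ)) {x : α}
    (hx : x ∈ newLabs s ρ G) : ∃ w ∈ (clN s ρ K).nodes, (clN s ρ K).lab w = x := by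
  obtain ⟨hxs, hxwin, -⟩ := mem_newLabs.1 hx
  by_cases hK : ∃ w ∈ K.nodes, K.lab w = x
  · obtain ⟨w, hw, rfl⟩ := hK
    exact ⟨w, mem_clN_nodes.2 (.inl hw), clN_lab_of_mem hw⟩
  · refine exists_clN_lab_eq (mem_newLabs.2 ⟨hxs, fun f hf => ?_, fun v hv hl => hK ⟨v, hv, hl⟩⟩)
    obtain ⟨g, hg, hwin⟩ := exists_clN_occ hf
    obtain ⟨i, hi, ⟨u, hu⟩, ⟨w, hw⟩⟩ := hxwin _ (hocc g hg)
    obtain ⟨⟨a, ha⟩, -⟩ := hwin (φ u)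
    obtain ⟨-, ⟨b, hb⟩⟩ := hwin (φ w)
    exact ⟨i, hi, ⟨a, ha.trans hu⟩, ⟨b, hw.trans hb⟩⟩

theorem embeds_icl_of_embeds_icl (h : Embeds G (icl s ρ K)) : Embeds (icl s ρ G) (icl s ρ K) := by
  obtain ⟨φ, hinj, hlab, hedge⟩ := h
  have hocc : ∀ g, IsOcc s ρ (clN s ρ K) g → IsOcc s ρ G (g ∘ φ) := fun g hg =>
    hg.comp hinj hlab fun u v he => (hedge u v he).2.2 g hg
  obtain ⟨ψ, hψi, hψl, hψold, -⟩ := exists_clN_extension (fun w => (icl s ρ K).lab w.1) hinj hlab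
    (fun _ => True) fun x hx => by
      obtain ⟨w, hw, hwx⟩ := exists_clN_lab_eq_of_isOcc_comp hocc hx
      exact ⟨⟨w, hw⟩, trivial, hwx⟩
  refine ⟨ψ, hψi, hψl, ?_⟩
  rintro u v ⟨_, _, huv⟩
  refine ⟨(ψ u).2, (ψ v).2, fun g hg => huv (g ∘ ψ) (hg.comp hψi hψl fun a b he => ?_)⟩
  have he' : G.edge a.1 b.1 := he
  simp only [hψold a (G.edge_mem he').1, hψold b (G.edge_mem he').2]
  exact (hocc g hg).2.2.1 _ _ he'

theorem IsSubgraph.embeds_icl (h : IsSubgraph G K) : Embeds (icl s ρ G) (icl s ρ K) :=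
  embeds_icl_of_embeds_icl (h.embeds.trans (Episode.embeds_icl K))

end Closure

noncomputable def edgeFinset (G : Episode α) : Finset (ℕ × ℕ) :=
  (G.nodes ×ˢ G.nodes).filter fun p => G.edge p.1 p.2

noncomputable def size (G : Episode α) : ℕ := G.nodes.card + G.edgeFinset.card

section Reduction

variable [LinearOrder α] {s : List α} {ρ : ℕ} {G G₁ F : Episode α}

theorem RemStep.size_lt (h : RemStep s ρ G G₁) : G₁.size < G.size := by
  rcases h with ⟨e, he, rfl⟩ | ⟨w, hw, rfl⟩
  · refine Nat.add_lt_add_left (Finset.card_lt_card ⟨fun p hp => ?_, fun hsub => ?_⟩) _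
    · exact Finset.mem_filter.2 ⟨(Finset.mem_filter.1 hp).1, (Finset.mem_filter.1 hp).2.1⟩
    · have hmem : e ∈ G.edgeFinset := Finset.mem_filter.2
        ⟨Finset.mem_product.2 (G.edge_mem he.1.1.1), he.1.1.1⟩
      exact (Finset.mem_filter.1 (hsub hmem)).2.2 rfl
  · refine Nat.add_lt_add_of_lt_of_le (Finset.card_erase_lt_of_mem hw.1.1) ?_
    refine Finset.card_le_card fun p hp => ?_
    obtain ⟨hp, hpe⟩ := Finset.mem_filter.1 hp
    exact Finset.mem_filter.2 ⟨Finset.product_subset_product (Finset.erase_subset _ _)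
      (Finset.erase_subset _ _) hp, hpe.1⟩

theorem exists_reflTransGen_remStep_normal (G : Episode α) :
    ∃ F, Relation.ReflTransGen (RemStep s ρ) G F ∧ ∀ F', ¬ RemStep s ρ F F' := by
  obtain ⟨F, hF, hmin⟩ := (measure size).wf.has_min {F | Relation.ReflTransGen (RemStep s ρ) G F}
    ⟨G, .refl⟩
  exact ⟨F, hF, fun F' h => hmin F' (hF.tail h) h.size_lt⟩

theorem RemStep.isSubgraph (h : RemStep s ρ G G₁) : IsSubgraph G₁ G := by
  rcases h with ⟨e, -, rfl⟩ | ⟨w, -, rfl⟩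
  exacts [isSubgraph_eraseEdge G e, isSubgraph_eraseNode G w]

theorem inS_of_remStep (h : RemStep s ρ G G₁) (hG : inS G) : inS G₁ := by
  rcases h with ⟨e, he, rfl⟩ | ⟨w, -, rfl⟩
  exacts [inS_eraseEdge hG he.1, inS_eraseNode hG w]

theorem RemStep.embeds_icl (h : RemStep s ρ G G₁) (hG : inS G) (hocc : Occurs s ρ G) :
    Embeds G (icl s ρ G₁) := by
  have hsub : Subep G (icl s ρ G₁) := by
    rcases h with ⟨e, he, rfl⟩ | ⟨w, hw, rfl⟩
    exacts [he.2, hw.2]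
  exact hsub.embeds hG (inS_icl (inS_of_remStep h hG) (hocc.of_isSubgraph h.isSubgraph))

/-- Derivability is inherited backwards along a removal step. -/
theorem RemStep.subep_icl (h : RemStep s ρ G G₁) (hG : inS G) (hocc : Occurs s ρ G)
    {X₁ X : Episode α} (hX₁ : inS X₁) (hoccX₁ : Occurs s ρ X₁) (hX : IsSubgraph X₁ X)
    (hsub : Subep G₁ (icl s ρ X₁)) : Subep G (icl s ρ X) :=
  (((h.embeds_icl hG hocc).trans (embeds_icl_of_embeds_icl
    (hsub.embeds (inS_of_remStep h hG) (inS_icl hX₁ hoccX₁)))).trans hX.embeds_icl).subep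

theorem RemStep.edge_of_not_derivable (h : RemStep s ρ G G₁) {e : ℕ × ℕ}
    (he : IsProperSkeletonEdge G e) (hnd : ¬ Subep G (icl s ρ (G.eraseEdge e))) :
    G₁.edge e.1 e.2 := by
  rcases h with ⟨e₀, he₀, rfl⟩ | ⟨w, hw, rfl⟩
  · refine ⟨he.1.1, fun heq => hnd ?_⟩
    rw [Prod.mk.eta] at heq
    exact heq ▸ he₀.2
  · exact ⟨he.1.1, fun h => (hw.1.2 e.2).2 (h ▸ he.1.1), fun h => (hw.1.2 e.1).1 (h ▸ he.1.1)⟩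

theorem RemStep.mem_nodes_of_not_derivable (h : RemStep s ρ G G₁) {v : ℕ} (hv : Solitary G v)
    (hnd : ¬ Subep G (icl s ρ (G.eraseNode v))) : v ∈ G₁.nodes := by
  rcases h with ⟨e₀, -, rfl⟩ | ⟨w, hw, rfl⟩
  · exact hv.1
  · refine Finset.mem_erase.2 ⟨fun hvw => hnd ?_, hv.1⟩
    exact hvw ▸ hw.2

theorem isSubgraph_of_reflTransGen (h : Relation.ReflTransGen (RemStep s ρ) G F) :
    IsSubgraph F G := by
  induction h with
  | refl => exact IsSubgraph.refl G
  | tail _ hstep ih => exact (RemStep.isSubgraph hstep).trans ih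

theorem inS_of_reflTransGen (h : Relation.ReflTransGen (RemStep s ρ) G F) (hG : inS G) :
    inS F := by
  induction h with
  | refl => exact hG
  | tail _ hstep ih => exact inS_of_remStep hstep ih

theorem embeds_icl_of_reflTransGen (h : Relation.ReflTransGen (RemStep s ρ) G F)
    (hG : inS G) (hocc : Occurs s ρ G) : Embeds G (icl s ρ F) := by
  induction h using Relation.ReflTransGen.head_induction_on with
  | refl => exact embeds_icl F
  | head hstep hchain ih =>
    exact (RemStep.embeds_icl hstep hG hocc).trans (embeds_icl_of_embeds_icl
      (ih (inS_of_remStep hstep hG) (hocc.of_isSubgraph (RemStep.isSubgraph hstep))))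

theorem edge_of_reflTransGen (h : Relation.ReflTransGen (RemStep s ρ) G F) (hG : inS G)
    (hocc : Occurs s ρ G) {e : ℕ × ℕ} (he : IsProperSkeletonEdge G e)
    (hnd : ¬ Subep G (icl s ρ (G.eraseEdge e))) : F.edge e.1 e.2 := by
  induction h using Relation.ReflTransGen.head_induction_on with
  | refl => exact he.1.1
  | head hstep hchain ih =>
    have hsub := RemStep.isSubgraph hstep
    have he₁ := he.of_isSubgraph hsub (RemStep.edge_of_not_derivable hstep he hnd)
    have hG₁ := inS_of_remStep hstep hG
    refine ih hG₁ (hocc.of_isSubgraph hsub) he₁ fun hd => hnd ?_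
    exact RemStep.subep_icl hstep hG hocc (inS_eraseEdge hG₁ he₁)
      (hocc.of_isSubgraph ((isSubgraph_eraseEdge _ e).trans hsub)) (hsub.eraseEdge e) hd

theorem mem_nodes_of_reflTransGen (h : Relation.ReflTransGen (RemStep s ρ) G F) (hG : inS G)
    (hocc : Occurs s ρ G) {v : ℕ} (hv : Solitary G v)
    (hnd : ¬ Subep G (icl s ρ (G.eraseNode v))) : v ∈ F.nodes := by
  induction h using Relation.ReflTransGen.head_induction_on with
  | refl => exact hv.1
  | head hstep hchain ih =>
    have hsub := RemStep.isSubgraph hstep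
    have hv₁ := hv.of_isSubgraph hsub (RemStep.mem_nodes_of_not_derivable hstep hv hnd)
    have hG₁ := inS_of_remStep hstep hG
    refine ih hG₁ (hocc.of_isSubgraph hsub) hv₁ fun hd => hnd ?_
    exact RemStep.subep_icl hstep hG hocc (inS_eraseNode hG₁ v)
      (hocc.of_isSubgraph ((isSubgraph_eraseNode _ v).trans hsub)) (hsub.eraseNode v) hd

end Reduction

end Episode

open Episode in
/-- For every `H ∈ 𝒮` occurring in `s` within a window of length at most `ρ`
there is an episode `F ∈ 𝒮`, `F ⪯ H`, obtained from `H` by repeatedly removing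
derivable proper skeleton edges and derivable solitary nodes, such that `F`
has no derivable proper skeleton edges and no derivable solitary nodes,
`H ⪯ icl(F)`, every non-derivable proper skeleton edge of `H` remains an edge
of `F`, and every non-derivable solitary node of `H` remains a node of `F`. -/
theorem stmt19 {α : Type*} [LinearOrder α] (s : List α) (ρ : ℕ)
    (H : Episode α) (hH : inS H) (hocc : Occurs s ρ H) :
    ∃ F : Episode α, Relation.ReflTransGen (RemStep s ρ) H F ∧
      inS F ∧ Subep F H ∧
      (∀ e, ¬ DerivableEdge s ρ F e) ∧
      (∀ v, ¬ DerivableNode s ρ F v) ∧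
      Subep H (icl s ρ F) ∧
      (∀ e, IsProperSkeletonEdge H e →
        ¬ Subep H (icl s ρ (H.eraseEdge e)) → F.edge e.1 e.2) ∧
      ∀ v, Solitary H v →
        ¬ Subep H (icl s ρ (H.eraseNode v)) → v ∈ F.nodes := by
  obtain ⟨F, hchain, hnormal⟩ := exists_reflTransGen_remStep_normal (s := s) (ρ := ρ) H
  exact ⟨F, hchain, inS_of_reflTransGen hchain hH,
    (isSubgraph_of_reflTransGen hchain).embeds.subep,
    fun e he => hnormal _ (.inl ⟨e, he, rfl⟩), fun v hv => hnormal _ (.inr ⟨v, hv, rfl⟩),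
    (embeds_icl_of_reflTransGen hchain hH hocc).subep,
    fun e he hnd => edge_of_reflTransGen hchain hH hocc he hnd,
    fun v hv hnd => mem_nodes_of_reflTransGen hchain hH hocc hv hnd⟩
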